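/- Given a strictly convex quadrilateral r1 r2 r3 r4 with non-orthogonal diagonals and its target square with targets p1, p2, p3, p4, no two of the four pathways (segments ri pi) intersect. -/

import Mathlib

open EuclideanGeometry Real
open scoped RealInnerProductSpace

noncomputable section

abbrev Pt := EuclideanSpace ℝ (Fin 2)

/-- Cross product of two planar vectors. -/
def cross2 (u v : Pt) : ℝ := u 0 * v 1 - u 1 * v 0

/-- Rotation of a planar vector by 90 degrees counterclockwise. -/
def rot90 (v : Pt) : Pt := WithLp.toLp 2 ![-(v 1), v 0]

/-- The line through `a` with direction vector `d`. -/
def lineDir (a d : Pt) : Set Pt := {p | cross2 (p - a) d = 0}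

/-- The line through two points, as a set. -/
def lineThru (a b : Pt) : Set Pt := (affineSpan ℝ {a, b} : Set Pt)

/-- Strictly convex position in the given cyclic order. -/
def Convex4 (a b c d : Pt) : Prop :=
  (0 < cross2 (b-a) (c-b) ∧ 0 < cross2 (c-b) (d-c) ∧ 0 < cross2 (d-c) (a-d) ∧ 0 < cross2 (a-d) (b-a)) ∨
  (cross2 (b-a) (c-b) < 0 ∧ cross2 (c-b) (d-c) < 0 ∧ cross2 (d-c) (a-d) < 0 ∧ cross2 (a-d) (b-a) < 0)

/-- `a b c d` in clockwise order: every consecutive triple has negative orientation. -/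
def Clockwise4 (a b c d : Pt) : Prop :=
  cross2 (b-a) (c-b) < 0 ∧ cross2 (c-b) (d-c) < 0 ∧ cross2 (d-c) (a-d) < 0 ∧ cross2 (a-d) (b-a) < 0

/-- A (nondegenerate) square: four equal sides and four right angles. -/
def IsSquare4 (a b c d : Pt) : Prop :=
  a ≠ b ∧ dist a b = dist b c ∧ dist b c = dist c d ∧ dist c d = dist d a ∧
  inner ℝ (b - a) (d - a) = (0:ℝ) ∧ inner ℝ (a - b) (c - b) = (0:ℝ) ∧
  inner ℝ (b - c) (d - c) = (0:ℝ) ∧ inner ℝ (c - d) (a - d) = (0:ℝ)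

/-- `q` is the auxiliary point of the target-square construction for `r1 r2 r3 r4`:
`dist r1 q = dist r2 r4`, the lines `r1 q` and `r2 r4` are orthogonal, and the ray
from `r1` through `q` intersects the line `r2 r4`. -/
def IsQPoint (r1 r2 r3 r4 q : Pt) : Prop :=
  dist r1 q = dist r2 r4 ∧ inner ℝ (q - r1) (r4 - r2) = (0:ℝ) ∧
  ∃ t : ℝ, 0 ≤ t ∧ r1 + t • (q - r1) ∈ lineDir r2 (r4 - r2)

/-!
In the frame of the target square, with `v = q - r3`, the lines `ℓ1, ℓ3` are level sets of
`⟪·, rot90 v⟫` and `ℓ2, ℓ4` level sets of `⟪·, v⟫`, so every pathway is an axis-parallel interval,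
and the target `p i` is the foot on `ℓ i` of the perpendicular from the midpoint of the two
neighbours of `r i`. Opposite pathways lie on distinct parallel lines, since the distance between
`ℓ1` and `ℓ3` is proportional to the product `⟪r3 - r1, r4 - r2⟫ ≠ 0` of the diagonals. Adjacent
pathways can only meet at a corner of the square, and a corner lying on both would make a
combination of orientations of triangles of the quadrilateral vanish whose terms all have the same
sign by strict convexity. Relabelling the vertices cyclically rotates `v` by a right angle and
reversing them swaps the orientation, so it suffices to treat the corner `ℓ1 ∩ ℓ2` of a clockwise
quadrilateral.
-/

open Set

theorem mem_uIcc_iff_sub_mul_sub_nonpos {α : Type*} [Ring α] [LinearOrder α]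
    [IsStrictOrderedRing α] {x a b : α} : x ∈ uIcc a b ↔ (x - a) * (x - b) ≤ 0 := by
  rw [mem_uIcc, mul_nonpos_iff, sub_nonneg, sub_nonpos, sub_nonpos, sub_nonneg,
    and_comm (a := a ≤ x), and_comm (a := x ≤ a)]

section InnerProductSpace

variable {E : Type*} [NormedAddCommGroup E] [InnerProductSpace ℝ E]

theorem inner_mem_uIcc_of_mem_segment {a b x : E} (u : E) (hx : x ∈ segment ℝ a b) :
    ⟪x, u⟫ ∈ uIcc ⟪a, u⟫ ⟪b, u⟫ := by
  rw [← segment_eq_uIcc]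
  obtain ⟨s, t, hs, ht, hst, rfl⟩ := hx
  exact ⟨s, t, hs, ht, hst, by simp [inner_add_left, inner_smul_left]⟩

theorem inner_eq_of_mem_segment {a b x u : E} (hab : ⟪b, u⟫ = ⟪a, u⟫) (hx : x ∈ segment ℝ a b) :
    ⟪x, u⟫ = ⟪a, u⟫ := by
  have h := inner_mem_uIcc_of_mem_segment u hx
  rwa [hab, uIcc_self, mem_singleton_iff] at h

theorem inner_midpoint_left (x y u : E) : ⟪midpoint ℝ x y, u⟫ = (⟪x, u⟫ + ⟪y, u⟫) / 2 := by
  rw [midpoint_eq_smul_add, inner_smul_left, inner_add_left]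
  simp [div_eq_inv_mul]

theorem disjoint_segment_of_inner_ne {a b c d u : E} (hab : ⟪b, u⟫ = ⟪a, u⟫)
    (hcd : ⟪d, u⟫ = ⟪c, u⟫) (hac : ⟪a, u⟫ ≠ ⟪c, u⟫) : Disjoint (segment ℝ a b) (segment ℝ c d) :=
  disjoint_left.2 fun _ hx hx' =>
    hac ((inner_eq_of_mem_segment hab hx).symm.trans (inner_eq_of_mem_segment hcd hx'))

theorem disjoint_segment_of_not_mem_uIcc {a b c d u v : E} (hab : ⟪b, u⟫ = ⟪a, u⟫)
    (hcd : ⟪d, v⟫ = ⟪c, v⟫) (h : ¬(⟪c, v⟫ ∈ uIcc ⟪a, v⟫ ⟪b, v⟫ ∧ ⟪a, u⟫ ∈ uIcc ⟪c, u⟫ ⟪d, u⟫)) :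
    Disjoint (segment ℝ a b) (segment ℝ c d) :=
  disjoint_left.2 fun _ hx hx' => h
    ⟨inner_eq_of_mem_segment hcd hx' ▸ inner_mem_uIcc_of_mem_segment v hx,
      inner_eq_of_mem_segment hab hx ▸ inner_mem_uIcc_of_mem_segment u hx'⟩

end InnerProductSpace

@[simp] theorem rot90_apply_zero (v : Pt) : rot90 v 0 = -v 1 := rfl
@[simp] theorem rot90_apply_one (v : Pt) : rot90 v 1 = v 0 := rfl

theorem inner_eq_coords (a b : Pt) : ⟪a, b⟫ = a 0 * b 0 + a 1 * b 1 := by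
  simp [PiLp.inner_apply, Fin.sum_univ_two, mul_comm]

theorem rot90_rot90 (v : Pt) : rot90 (rot90 v) = -v := by
  ext i; fin_cases i <;> simp

theorem rot90_add (a b : Pt) : rot90 (a + b) = rot90 a + rot90 b := by
  ext i; fin_cases i <;> simp [add_comm]

theorem rot90_neg (v : Pt) : rot90 (-v) = -rot90 v := by
  ext i; fin_cases i <;> simp

theorem inner_rot90_left (a b : Pt) : ⟪rot90 a, b⟫ = -⟪a, rot90 b⟫ := by
  simp only [inner_eq_coords, rot90_apply_zero, rot90_apply_one]; ring

theorem cross2_eq_inner_rot90 (a b : Pt) : cross2 a b = ⟪rot90 a, b⟫ := by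
  simp only [cross2, inner_eq_coords, rot90_apply_zero, rot90_apply_one]; ring

theorem mem_lineDir_iff {p a d : Pt} : p ∈ lineDir a d ↔ ⟪p, rot90 d⟫ = ⟪a, rot90 d⟫ := by
  change cross2 (p - a) d = 0 ↔ _
  rw [cross2_eq_inner_rot90, inner_rot90_left, neg_eq_zero, inner_sub_left, sub_eq_zero]

theorem mem_lineDir_rot90_iff {p a d : Pt} : p ∈ lineDir a (rot90 d) ↔ ⟪p, d⟫ = ⟪a, d⟫ := by
  rw [mem_lineDir_iff, rot90_rot90, inner_neg_right, inner_neg_right, neg_inj]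

theorem lineDir_neg (a d : Pt) : lineDir a (-d) = lineDir a d := by
  ext p
  rw [mem_lineDir_iff, mem_lineDir_iff, rot90_neg, inner_neg_right, inner_neg_right, neg_inj]

theorem eq_rot90_or_eq_neg_rot90 {u w : Pt} (hn : ‖u‖ = ‖w‖) (ho : ⟪u, w⟫ = 0) :
    u = rot90 w ∨ u = -rot90 w := by
  have hn2 : ⟪u, u⟫ = ⟪w, w⟫ := by rw [real_inner_self_eq_norm_sq, real_inner_self_eq_norm_sq, hn]
  have key : ⟪u - rot90 w, u - rot90 w⟫ * ⟪u + rot90 w, u + rot90 w⟫ = 0 := by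
    simp only [inner_eq_coords, PiLp.sub_apply, PiLp.add_apply, rot90_apply_zero, rot90_apply_one]
      at hn2 ho ⊢
    linear_combination
      (u 0 ^ 2 + u 1 ^ 2 - w 0 ^ 2 - w 1 ^ 2) * hn2 + 4 * (u 0 * w 0 + u 1 * w 1) * ho
  rcases mul_eq_zero.1 key with h | h
  · exact Or.inl (sub_eq_zero.1 (inner_self_eq_zero.1 h))
  · exact Or.inr (eq_neg_of_add_eq_zero_left (inner_self_eq_zero.1 h))

/-- `F i = ⟪r i, v⟫`, `G i = ⟪r i, rot90 v⟫` and `D = ⟪v, v⟫` are the coordinates of a clockwise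
quadrilateral in the frame of its target square; `(F2, G1)` is the corner `ℓ1 ∩ ℓ2`. -/
theorem corner_not_mem_both_pathways {F1 F2 F3 F4 G1 G2 G3 G4 D : ℝ} (hD : 0 ≤ D)
    (hs : F2 ≠ F4) (hG : G1 - G3 = F2 - F4) (hF : F1 - F3 = D + (G4 - G2))
    (c12 : (F2 - F1) * (G3 - G2) - (G2 - G1) * (F3 - F2) < 0)
    (c34 : (F4 - F3) * (G1 - G4) - (G4 - G3) * (F1 - F4) < 0)
    (c41 : (F1 - F4) * (G2 - G1) - (G1 - G4) * (F2 - F1) < 0) :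
    ¬(F2 ∈ uIcc F1 ((F4 + F2) / 2) ∧ G1 ∈ uIcc G2 ((G1 + G3) / 2)) := by
  simp only [mem_uIcc_iff_sub_mul_sub_nonpos]
  rintro ⟨hF2, hG1⟩
  rcases hs.lt_or_gt with hs | hs
  · have ha : 0 ≤ F2 - F1 := by nlinarith
    have hb : 0 ≤ G1 - G2 := by nlinarith
    have hg : 0 ≤ G1 - G4 := by nlinarith [mul_nonneg ha hb]
    have key : (G1 - G2) * ((F4 - F3) * (G1 - G4) - (G4 - G3) * (F1 - F4))
        + (G1 - G4) * ((F2 - F1) * (G3 - G2) - (G2 - G1) * (F3 - F2))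
        + (F4 - F2) * ((F1 - F4) * (G2 - G1) - (G1 - G4) * (F2 - F1)) = 0 := by
      linear_combination -((G1 - G2) * (F1 - F4) + (G1 - G4) * (F2 - F1)) * hG
    nlinarith [mul_nonpos_of_nonneg_of_nonpos hb c34.le,
      mul_nonpos_of_nonneg_of_nonpos hg c12.le, mul_neg_of_pos_of_neg (sub_pos.2 hs) c41]
  · have ha : 0 ≤ F1 - F2 := by nlinarith
    have hb : 0 ≤ G2 - G1 := by nlinarith
    have key : (F1 - F2) * ((F2 - F1) * (G3 - G2) - (G2 - G1) * (F3 - F2))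
        + (G2 - G1) * ((F1 - F4) * (G2 - G1) - (G1 - G4) * (F2 - F1))
        = (F2 - F4) * ((F1 - F2) ^ 2 + (G2 - G1) ^ 2) + (F1 - F2) * (G2 - G1) * D := by
      linear_combination (G2 - G1) * (F1 - F2) * hF + (F1 - F2) ^ 2 * hG
    have hsq : (F1 - F2) ^ 2 + (G2 - G1) ^ 2 ≤ 0 :=
      nonpos_of_mul_nonpos_right (by nlinarith [mul_nonpos_of_nonneg_of_nonpos ha c12.le,
        mul_nonpos_of_nonneg_of_nonpos hb c41.le, mul_nonneg (mul_nonneg ha hb) hD]) (sub_pos.2 hs)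
    have hF12 : F2 - F1 = 0 := by nlinarith [sq_nonneg (F1 - F2), sq_nonneg (G2 - G1)]
    have hG12 : G2 - G1 = 0 := by nlinarith [sq_nonneg (F1 - F2), sq_nonneg (G2 - G1)]
    simp [hF12, hG12] at c12

theorem inner_sub_mul_inner_rot90_sub (a b c v : Pt) :
    (⟪b, v⟫ - ⟪a, v⟫) * (⟪c, rot90 v⟫ - ⟪b, rot90 v⟫)
      - (⟪b, rot90 v⟫ - ⟪a, rot90 v⟫) * (⟪c, v⟫ - ⟪b, v⟫) = ⟪v, v⟫ * cross2 (b - a) (c - b) := by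
  simp only [cross2, inner_eq_coords, PiLp.sub_apply, rot90_apply_zero, rot90_apply_one]; ring

def IsFoot (r d m p : Pt) : Prop := p ∈ lineDir r d ∩ lineDir m (rot90 d)

section IsFoot

variable {r d m m' p p' : Pt}

theorem IsFoot.inner_rot90_eq (h : IsFoot r d m p) : ⟪p, rot90 d⟫ = ⟪r, rot90 d⟫ :=
  mem_lineDir_iff.1 h.1

theorem IsFoot.inner_eq (h : IsFoot r d m p) : ⟪p, d⟫ = ⟪m, d⟫ :=
  mem_lineDir_rot90_iff.1 h.2

theorem isFoot_neg : IsFoot r (-d) m p ↔ IsFoot r d m p := by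
  rw [IsFoot, IsFoot, rot90_neg, lineDir_neg, lineDir_neg]

theorem isFoot_rot90_iff : IsFoot r (rot90 d) m p ↔ p ∈ lineDir r (rot90 d) ∩ lineDir m d := by
  rw [IsFoot, rot90_rot90, lineDir_neg]

theorem IsFoot.midpoint (h : IsFoot r d m p) (h' : IsFoot r d m' p') :
    IsFoot r d (midpoint ℝ m m') (midpoint ℝ p p') := by
  refine ⟨mem_lineDir_iff.2 ?_, mem_lineDir_rot90_iff.2 ?_⟩
  · rw [inner_midpoint_left, h.inner_rot90_eq, h'.inner_rot90_eq, add_self_div_two]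
  · rw [inner_midpoint_left, inner_midpoint_left, h.inner_eq, h'.inner_eq]

end IsFoot

/-- The direction of `ℓ1` and `ℓ3` for a clockwise quadrilateral: `q - r3` with
`q = r1 + rot90 (r4 - r2)`. -/
def squareDir (r1 r2 r3 r4 : Pt) : Pt := r1 - r3 + rot90 (r4 - r2)

section squareDir

variable (r1 r2 r3 r4 : Pt)

theorem squareDir_rotate : squareDir r2 r3 r4 r1 = rot90 (squareDir r1 r2 r3 r4) := by
  rw [squareDir, squareDir, rot90_add, rot90_rot90]; abel

theorem inner_diag_squareDir : ⟪r2 - r4, squareDir r1 r2 r3 r4⟫ = ⟪r3 - r1, r4 - r2⟫ := by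
  simp only [squareDir, inner_eq_coords, PiLp.sub_apply, PiLp.add_apply, rot90_apply_zero,
    rot90_apply_one]; ring

theorem inner_rot90_squareDir :
    ⟪r1 - r3, rot90 (squareDir r1 r2 r3 r4)⟫ = ⟪r2 - r4, squareDir r1 r2 r3 r4⟫ := by
  simp only [squareDir, inner_eq_coords, PiLp.sub_apply, PiLp.add_apply, rot90_apply_zero,
    rot90_apply_one]; ring

theorem inner_squareDir : ⟪r1 - r3, squareDir r1 r2 r3 r4⟫ =
    ⟪squareDir r1 r2 r3 r4, squareDir r1 r2 r3 r4⟫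
      + ⟪r4 - r2, rot90 (squareDir r1 r2 r3 r4)⟫ := by
  simp only [squareDir, inner_eq_coords, PiLp.sub_apply, PiLp.add_apply, rot90_apply_zero,
    rot90_apply_one]; ring

end squareDir

structure TargetSquare (r1 r2 r3 r4 p1 p2 p3 p4 : Pt) : Prop where
  clockwise : Clockwise4 r1 r2 r3 r4
  diag : ⟪r3 - r1, r4 - r2⟫ ≠ 0
  foot1 : IsFoot r1 (squareDir r1 r2 r3 r4) (midpoint ℝ r4 r2) p1
  foot2 : IsFoot r2 (rot90 (squareDir r1 r2 r3 r4)) (midpoint ℝ r1 r3) p2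
  foot3 : IsFoot r3 (squareDir r1 r2 r3 r4) (midpoint ℝ r2 r4) p3
  foot4 : IsFoot r4 (rot90 (squareDir r1 r2 r3 r4)) (midpoint ℝ r3 r1) p4

namespace TargetSquare

variable {r1 r2 r3 r4 p1 p2 p3 p4 : Pt}

theorem rotate (h : TargetSquare r1 r2 r3 r4 p1 p2 p3 p4) :
    TargetSquare r2 r3 r4 r1 p2 p3 p4 p1 where
  clockwise := ⟨h.clockwise.2.1, h.clockwise.2.2.1, h.clockwise.2.2.2, h.clockwise.1⟩
  diag := by
    rw [← neg_sub r3 r1, inner_neg_right, real_inner_comm]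
    exact neg_ne_zero.2 h.diag
  foot1 := by rw [squareDir_rotate]; exact h.foot2
  foot2 := by rw [squareDir_rotate, rot90_rot90, isFoot_neg]; exact h.foot3
  foot3 := by rw [squareDir_rotate]; exact h.foot4
  foot4 := by rw [squareDir_rotate, rot90_rot90, isFoot_neg]; exact h.foot1

theorem disjoint_segment_13 (h : TargetSquare r1 r2 r3 r4 p1 p2 p3 p4) :
    Disjoint (segment ℝ r1 p1) (segment ℝ r3 p3) := by
  refine disjoint_segment_of_inner_ne h.foot1.inner_rot90_eq h.foot3.inner_rot90_eq ?_
  rw [Ne, ← sub_eq_zero, ← inner_sub_left, inner_rot90_squareDir, inner_diag_squareDir]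
  exact h.diag

theorem disjoint_segment_12 (h : TargetSquare r1 r2 r3 r4 p1 p2 p3 p4) :
    Disjoint (segment ℝ r1 p1) (segment ℝ r2 p2) := by
  set v := squareDir r1 r2 r3 r4
  refine disjoint_segment_of_not_mem_uIcc h.foot1.inner_rot90_eq
    (mem_lineDir_rot90_iff.1 h.foot2.1) ?_
  rw [h.foot1.inner_eq, h.foot2.inner_eq, inner_midpoint_left, inner_midpoint_left]
  have hs : ⟪r2, v⟫ ≠ ⟪r4, v⟫ := by
    rw [Ne, ← sub_eq_zero, ← inner_sub_left, inner_diag_squareDir]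
    exact h.diag
  have hD : 0 < ⟪v, v⟫ := real_inner_self_pos.2 fun hv ↦ hs (by simp [hv])
  have hG : ⟪r1, rot90 v⟫ - ⟪r3, rot90 v⟫ = ⟪r2, v⟫ - ⟪r4, v⟫ := by
    rw [← inner_sub_left, ← inner_sub_left, inner_rot90_squareDir]
  have hF : ⟪r1, v⟫ - ⟪r3, v⟫ = ⟪v, v⟫ + (⟪r4, rot90 v⟫ - ⟪r2, rot90 v⟫) := by
    rw [← inner_sub_left, ← inner_sub_left, inner_squareDir]
  obtain ⟨c12, -, c34, c41⟩ := h.clockwise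
  refine corner_not_mem_both_pathways hD.le hs hG hF ?_ ?_ ?_ <;>
    rw [inner_sub_mul_inner_rot90_sub] <;> exact mul_neg_of_pos_of_neg hD ‹_›

theorem pairwise_disjoint (h : TargetSquare r1 r2 r3 r4 p1 p2 p3 p4) :
    Disjoint (segment ℝ r1 p1) (segment ℝ r2 p2) ∧ Disjoint (segment ℝ r1 p1) (segment ℝ r3 p3) ∧
    Disjoint (segment ℝ r1 p1) (segment ℝ r4 p4) ∧ Disjoint (segment ℝ r2 p2) (segment ℝ r3 p3) ∧
    Disjoint (segment ℝ r2 p2) (segment ℝ r4 p4) ∧ Disjoint (segment ℝ r3 p3) (segment ℝ r4 p4) :=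
  ⟨h.disjoint_segment_12, h.disjoint_segment_13, h.rotate.rotate.rotate.disjoint_segment_12.symm,
    h.rotate.disjoint_segment_12, h.rotate.disjoint_segment_13, h.rotate.rotate.disjoint_segment_12⟩

end TargetSquare

theorem Convex4.clockwise_or_clockwise_reverse {a b c d : Pt} (h : Convex4 a b c d) :
    Clockwise4 a b c d ∨ Clockwise4 a d c b := by
  rcases h with ⟨h1, h2, h3, h4⟩ | h
  · right
    simp only [Clockwise4, cross2, PiLp.sub_apply] at h1 h2 h3 h4 ⊢
    exact ⟨by linarith, by linarith, by linarith, by linarith⟩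
  · exact Or.inl h

section IsQPoint

variable {r1 r2 r3 r4 q : Pt}

theorem IsQPoint.reverse (h : IsQPoint r1 r2 r3 r4 q) : IsQPoint r1 r4 r3 r2 q := by
  obtain ⟨hd, ho, t, ht, hl⟩ := h
  refine ⟨by rw [hd, dist_comm], by rw [← neg_sub r4 r2, inner_neg_right, ho, neg_zero],
    t, ht, ?_⟩
  change cross2 _ _ = 0 at hl ⊢
  simp only [cross2, PiLp.sub_apply] at hl ⊢
  linear_combination -hl

theorem IsQPoint.eq_add_rot90 (h : IsQPoint r1 r2 r3 r4 q) (hcw : Clockwise4 r1 r2 r3 r4) :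
    q = r1 + rot90 (r4 - r2) := by
  obtain ⟨hd, ho, t, ht, hl⟩ := h
  have hn : ‖q - r1‖ = ‖r4 - r2‖ := by
    rw [← dist_eq_norm, ← dist_eq_norm, dist_comm, hd, dist_comm]
  rcases eq_rot90_or_eq_neg_rot90 hn ho with hu | hu
  · rw [← hu, add_sub_cancel]
  · rw [hu] at hl
    change cross2 _ _ = 0 at hl
    have h41 := hcw.2.2.2
    simp only [cross2, PiLp.sub_apply, PiLp.add_apply, PiLp.smul_apply, PiLp.neg_apply,
      rot90_apply_zero, rot90_apply_one, smul_eq_mul] at hl h41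
    nlinarith [mul_nonneg ht (add_nonneg (sq_nonneg (r4 0 - r2 0)) (sq_nonneg (r4 1 - r2 1)))]

end IsQPoint

theorem stmt5_general
    (r1 r2 r3 r4 q a12 a23 a34 a41 : Pt)
    (hconv : Convex4 r1 r2 r3 r4)
    (hdiag : inner ℝ (r3 - r1) (r4 - r2) ≠ (0:ℝ))
    (hq : IsQPoint r1 r2 r3 r4 q)
    (ha12 : a12 ∈ lineDir r1 (q - r3) ∩ lineDir r2 (rot90 (q - r3)))
    (ha23 : a23 ∈ lineDir r2 (rot90 (q - r3)) ∩ lineDir r3 (q - r3))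
    (ha34 : a34 ∈ lineDir r3 (q - r3) ∩ lineDir r4 (rot90 (q - r3)))
    (ha41 : a41 ∈ lineDir r4 (rot90 (q - r3)) ∩ lineDir r1 (q - r3))
    (p1 p2 p3 p4 : Pt)
    (hp1 : p1 = midpoint ℝ a41 a12) (hp2 : p2 = midpoint ℝ a12 a23)
    (hp3 : p3 = midpoint ℝ a23 a34) (hp4 : p4 = midpoint ℝ a34 a41)
 :
    Disjoint (segment ℝ r1 p1) (segment ℝ r2 p2) ∧
    Disjoint (segment ℝ r1 p1) (segment ℝ r3 p3) ∧
    Disjoint (segment ℝ r1 p1) (segment ℝ r4 p4) ∧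
    Disjoint (segment ℝ r2 p2) (segment ℝ r3 p3) ∧
    Disjoint (segment ℝ r2 p2) (segment ℝ r4 p4) ∧
    Disjoint (segment ℝ r3 p3) (segment ℝ r4 p4) := by
  subst hp1 hp2 hp3 hp4
  have f1 : IsFoot r1 (q - r3) (midpoint ℝ r4 r2) (midpoint ℝ a41 a12) :=
    IsFoot.midpoint ⟨ha41.2, ha41.1⟩ ha12
  have f2 : IsFoot r2 (rot90 (q - r3)) (midpoint ℝ r1 r3) (midpoint ℝ a12 a23) :=
    (isFoot_rot90_iff.2 ⟨ha12.2, ha12.1⟩).midpoint (isFoot_rot90_iff.2 ha23)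
  have f3 : IsFoot r3 (q - r3) (midpoint ℝ r2 r4) (midpoint ℝ a23 a34) :=
    IsFoot.midpoint ⟨ha23.2, ha23.1⟩ ha34
  have f4 : IsFoot r4 (rot90 (q - r3)) (midpoint ℝ r3 r1) (midpoint ℝ a34 a41) :=
    (isFoot_rot90_iff.2 ⟨ha34.2, ha34.1⟩).midpoint (isFoot_rot90_iff.2 ha41)
  rcases hconv.clockwise_or_clockwise_reverse with hcw | hcw
  · have hv : q - r3 = squareDir r1 r2 r3 r4 := by
      rw [hq.eq_add_rot90 hcw, squareDir]; abel
    rw [hv] at f1 f2 f3 f4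
    exact (TargetSquare.mk hcw hdiag f1 f2 f3 f4).pairwise_disjoint
  · have hv : q - r3 = squareDir r1 r4 r3 r2 := by
      rw [hq.reverse.eq_add_rot90 hcw, squareDir]; abel
    have hdiag' : ⟪r3 - r1, r2 - r4⟫ ≠ 0 := by
      rwa [← neg_sub r4 r2, inner_neg_right, neg_ne_zero]
    rw [hv, midpoint_comm] at f1 f2 f3 f4
    obtain ⟨h14, h13, h12, h43, h42, h32⟩ :=
      (TargetSquare.mk hcw hdiag' f1 f4 f3 f2).pairwise_disjoint
    exact ⟨h12, h13, h14, h32.symm, h42.symm, h43.symm⟩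

/-- No two robots have intersecting pathways. -/
theorem stmt5
    (r1 r2 r3 r4 q a12 a23 a34 a41 : Pt)
    (hconv : Convex4 r1 r2 r3 r4)
    (hdiag : inner ℝ (r3 - r1) (r4 - r2) ≠ (0:ℝ))
    (hq : IsQPoint r1 r2 r3 r4 q) (hq3 : q ≠ r3)
    (ha12 : a12 ∈ lineDir r1 (q - r3) ∩ lineDir r2 (rot90 (q - r3)))
    (ha23 : a23 ∈ lineDir r2 (rot90 (q - r3)) ∩ lineDir r3 (q - r3))
    (ha34 : a34 ∈ lineDir r3 (q - r3) ∩ lineDir r4 (rot90 (q - r3)))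
    (ha41 : a41 ∈ lineDir r4 (rot90 (q - r3)) ∩ lineDir r1 (q - r3))
    (p1 p2 p3 p4 : Pt)
    (hp1 : p1 = midpoint ℝ a41 a12) (hp2 : p2 = midpoint ℝ a12 a23)
    (hp3 : p3 = midpoint ℝ a23 a34) (hp4 : p4 = midpoint ℝ a34 a41)
 :
    Disjoint (segment ℝ r1 p1) (segment ℝ r2 p2) ∧
    Disjoint (segment ℝ r1 p1) (segment ℝ r3 p3) ∧
    Disjoint (segment ℝ r1 p1) (segment ℝ r4 p4) ∧
    Disjoint (segment ℝ r2 p2) (segment ℝ r3 p3) ∧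
    Disjoint (segment ℝ r2 p2) (segment ℝ r4 p4) ∧
    Disjoint (segment ℝ r3 p3) (segment ℝ r4 p4) :=
  stmt5_general r1 r2 r3 r4 q a12 a23 a34 a41 hconv hdiag hq ha12 ha23 ha34 ha41 p1 p2 p3 p4 hp1 hp2
    hp3 hp4

end
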